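/- Let $S, Z \subset \mathbb{Z}_m$ with $m > 100$, $\max_{s \in S} s \le \sqrt{m}$, $|S| \le \sqrt{m}/2$, and $|Z| \le \sqrt{m}/2$. Then for every $s \in S$ there exist $x, y \in \mathbb{Z}_m \setminus Z$ such that $x + y + s \equiv 0 \pmod{m}$, and for all $z \in Z$ and all $s' \in S$, $x + z + s' \not\equiv 0 \pmod m$ and $y + z + s' \not\equiv 0 \pmod m$. -/

import Mathlib

/-!
Take `y = -x - s`. The pair then fails only if `x` lies in one of `Z`, `-s - Z`, `-(Z + S)` or
`Z + S - s`, a set of at most `2|Z| + 2|Z||S| ≤ √m + m/2 < m` elements, so some `x` avoids it.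
-/

open Finset

section Packing

variable {G : Type*} [AddCommGroup G] [DecidableEq G]

def packingObstructions (Z S : Finset G) (s : G) : Finset G :=
  Z ∪ Z.image (fun z => -s - z) ∪ (Z ×ˢ S).image (fun p => -(p.1 + p.2))
    ∪ (Z ×ˢ S).image (fun p => p.1 + p.2 - s)

theorem card_packingObstructions_le (Z S : Finset G) (s : G) :
    #(packingObstructions Z S s) ≤ 2 * #Z + 2 * (#Z * #S) := by
  have hZ : #(Z.image fun z => -s - z) ≤ #Z := card_image_le
  have hneg : #((Z ×ˢ S).image fun p => -(p.1 + p.2)) ≤ #Z * #S :=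
    card_image_le.trans_eq (card_product Z S)
  have hsub : #((Z ×ˢ S).image fun p => p.1 + p.2 - s) ≤ #Z * #S :=
    card_image_le.trans_eq (card_product Z S)
  unfold packingObstructions
  grw [card_union_le, card_union_le, card_union_le]
  omega

theorem packing_pair_of_notMem_packingObstructions {Z S : Finset G} {s x : G}
    (hx : x ∉ packingObstructions Z S s) :
    x ∉ Z ∧ -x - s ∉ Z ∧ x + (-x - s) + s = 0 ∧
      ∀ z ∈ Z, ∀ s' ∈ S, x + z + s' ≠ 0 ∧ -x - s + z + s' ≠ 0 := by
  simp only [packingObstructions, mem_union, mem_image, mem_product, not_or, not_exists,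
    not_and, Prod.forall] at hx
  obtain ⟨⟨⟨hxZ, hxZ'⟩, hxneg⟩, hxsub⟩ := hx
  refine ⟨hxZ, fun h => hxZ' _ h (by abel), by abel, fun z hz s' hs' => ⟨?_, ?_⟩⟩
  · exact fun h => hxneg z s' ⟨hz, hs'⟩ (sub_eq_zero.mp (by rw [← neg_eq_zero, ← h]; abel))
  · exact fun h => hxsub z s' ⟨hz, hs'⟩ (sub_eq_zero.mp (by rw [← h]; abel))

theorem exists_packing_pair [Fintype G] (Z S : Finset G) (s : G)
    (hcard : 2 * #Z + 2 * (#Z * #S) < Fintype.card G) :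
    ∃ x y : G, x ∉ Z ∧ y ∉ Z ∧ x + y + s = 0 ∧
      ∀ z ∈ Z, ∀ s' ∈ S, x + z + s' ≠ 0 ∧ y + z + s' ≠ 0 := by
  obtain ⟨x, -, hx⟩ := exists_mem_notMem_of_card_lt_card
    ((card_packingObstructions_le Z S s).trans_lt (hcard.trans_eq card_univ.symm))
  exact ⟨x, -x - s, packing_pair_of_notMem_packingObstructions hx⟩

end Packing

theorem two_mul_add_two_mul_mul_lt_of_le_sqrt_div_two {m a b : ℝ} (hm : 4 < m)
    (ha₀ : 0 ≤ a) (hb₀ : 0 ≤ b) (ha : a ≤ √m / 2) (hb : b ≤ √m / 2) :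
    2 * a + 2 * (a * b) < m := by
  have hsq : √m * √m = m := Real.mul_self_sqrt (by linarith)
  have hab : a * b ≤ m / 4 := by
    nlinarith [mul_le_mul ha hb hb₀ (by positivity : 0 ≤ √m / 2)]
  have hsqrt : √m < m / 2 := by nlinarith [Real.sqrt_nonneg m]
  linarith

theorem match3_packing_general (m : ℕ) [NeZero m] (hm : 100 < m)
    (S Z : Finset (ZMod m))
    (hScard : (S.card : ℝ) ≤ Real.sqrt m / 2)
    (hZcard : (Z.card : ℝ) ≤ Real.sqrt m / 2) :
    ∀ s ∈ S, ∃ x y : ZMod m, x ∉ Z ∧ y ∉ Z ∧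
      x + y + s = 0 ∧
      (∀ z ∈ Z, ∀ s' ∈ S, x + z + s' ≠ 0 ∧ y + z + s' ≠ 0) := by
  intro s _
  refine exists_packing_pair Z S s ?_
  have hm' : (4 : ℝ) < m := by exact_mod_cast (by omega : 4 < m)
  rw [ZMod.card]
  exact_mod_cast two_mul_add_two_mul_mul_lt_of_le_sqrt_div_two hm' (Nat.cast_nonneg _)
    (Nat.cast_nonneg _) hZcard hScard

/-- Packing lemma for Match3: given `S, Z ⊆ ℤ_m` with `m > 100`, every element of `S`
at most `√m` (as canonical representative), and `|S|, |Z| ≤ √m / 2`, for each `s ∈ S`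
there are `x, y ∉ Z` with `x + y + s ≡ 0 (mod m)` forming no other matches with `Z` and `S`. -/
theorem match3_packing (m : ℕ) [NeZero m] (hm : 100 < m)
    (S Z : Finset (ZMod m))
    (hS_small : ∀ s ∈ S, (ZMod.val s : ℝ) ≤ Real.sqrt m)
    (hScard : (S.card : ℝ) ≤ Real.sqrt m / 2)
    (hZcard : (Z.card : ℝ) ≤ Real.sqrt m / 2) :
    ∀ s ∈ S, ∃ x y : ZMod m, x ∉ Z ∧ y ∉ Z ∧
      x + y + s = 0 ∧
      (∀ z ∈ Z, ∀ s' ∈ S, x + z + s' ≠ 0 ∧ y + z + s' ≠ 0) :=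
  match3_packing_general m hm S Z hScard hZcard
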